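/- Let A be a real K×K matrix, let R be a symmetric positive definite K×K matrix with smallest eigenvalue λ > 0, and let Σ₀ be symmetric positive definite. Define Σ_t = (A Σ_{t−1} Aᵀ + R)(A Σ_{t−1} Aᵀ + R + I)⁻¹ for t ≥ 1. Then for all t ≥ 0 and n ≥ 0, ‖Σ_{t+n} − Σ_t‖ ≤ (‖A‖/(1 + λ))^{2t} · ‖Σ_n − Σ₀‖. In particular, if ‖A‖ < 1 the sequence (Σ_t) is Cauchy in operator norm. -/

import Mathlib

/-!
Write `P(X) = A X Aᵀ + R + 1`, so that one Riccati step is `f(X) = 1 - P(X)⁻¹`. Hence `f`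
preserves positive semidefiniteness, and for positive semidefinite `X`, `Y`
`f(X) - f(Y) = P(X)⁻¹ A (X - Y) Aᵀ P(Y)⁻¹` with `P(X), P(Y) ≥ (1 + λ) I`, so that both inverses
have norm at most `1 / (1 + λ)` by the functional calculus. Thus `f` is
`(‖A‖ / (1 + λ))²`-Lipschitz on the positive cone, which gives the bound after iterating, and the
Cauchy property by comparison with a geometric series. Since only the order and the functional
calculus are used, the argument runs in any real normed ⋆-algebra with an isometric continuous
functional calculus, such as real matrices with the L² operator norm.
-/

open Matrix

/-- The operator norm of a real `K × K` matrix induced by the Euclidean norm on `ℝ^K`. -/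
noncomputable def opNorm {K : ℕ} (A : Matrix (Fin K) (Fin K) ℝ) : ℝ :=
  ‖Matrix.toEuclideanCLM (𝕜 := ℝ) A‖

open Ring

lemma mul_ringInverse_add_one {R : Type*} [Ring R] {q : R} (h : IsUnit (q + 1)) :
    q * (q + 1)⁻¹ʳ = 1 - (q + 1)⁻¹ʳ := by
  rw [eq_sub_iff_add_eq, ← add_one_mul q, Ring.mul_inverse_cancel _ h]

lemma ringInverse_sub_ringInverse {R : Type*} [Ring R] {p q : R} (hp : IsUnit p)
    (hq : IsUnit q) : q⁻¹ʳ - p⁻¹ʳ = p⁻¹ʳ * (p - q) * q⁻¹ʳ := by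
  rw [mul_sub, sub_mul, Ring.inverse_mul_cancel _ hp, one_mul, mul_assoc,
    Ring.mul_inverse_cancel _ hq, mul_one]

lemma norm_orbit_sub_le_pow_mul {E : Type*} [SeminormedAddCommGroup E] {f : E → E} {s : Set E}
    {K : ℝ} {u : ℕ → E} (hK : 0 ≤ K) (hu : ∀ t, u (t + 1) = f (u t)) (hmem : ∀ t, u t ∈ s)
    (hf : ∀ x ∈ s, ∀ y ∈ s, ‖f x - f y‖ ≤ K * ‖x - y‖) (t n : ℕ) :
    ‖u (t + n) - u t‖ ≤ K ^ t * ‖u n - u 0‖ := by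
  induction t with
  | zero => simp
  | succ t ih =>
    rw [Nat.add_right_comm, hu, hu, pow_succ', mul_assoc]
    exact (hf _ (hmem _) _ (hmem _)).trans (mul_le_mul_of_nonneg_left ih hK)

noncomputable def riccatiMap {A : Type*} [Ring A] [Star A] (a r x : A) : A :=
  (a * x * star a + r) * (a * x * star a + r + 1)⁻¹ʳ

section RealCFC

variable {A : Type*} [NormedRing A] [StarRing A] [NormedAlgebra ℝ A] [PartialOrder A]
  [StarOrderedRing A] {p a r x y : A} {c : ℝ}

lemma algebraMap_le_conj_add_add_one (hr : algebraMap ℝ A c ≤ r + 1) (hx : 0 ≤ x) :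
    algebraMap ℝ A c ≤ a * x * star a + r + 1 := by
  rw [add_assoc]
  exact le_add_of_nonneg_of_le (star_right_conjugate_nonneg hx a) hr

variable [StarModule ℝ A]

lemma isSelfAdjoint_of_algebraMap_le (h : algebraMap ℝ A c ≤ p) : IsSelfAdjoint p := by
  simpa using (IsSelfAdjoint.algebraMap A (.all c)).add (sub_nonneg.2 h).isSelfAdjoint

variable [IsometricContinuousFunctionalCalculus ℝ A IsSelfAdjoint] [NonnegSpectrumClass ℝ A]

lemma le_of_mem_spectrum_of_algebraMap_le (h : algebraMap ℝ A c ≤ p) {x : ℝ}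
    (hx : x ∈ spectrum ℝ p) : c ≤ x :=
  (algebraMap_le_iff_le_spectrum (isSelfAdjoint_of_algebraMap_le h)).1 h x hx

lemma isUnit_of_algebraMap_le (hc : 0 < c) (h : algebraMap ℝ A c ≤ p) : IsUnit p :=
  spectrum.isUnit_of_zero_notMem ℝ fun h0 => (le_of_mem_spectrum_of_algebraMap_le h h0).not_gt hc

lemma norm_ringInverse_le_of_algebraMap_le (hc : 0 < c) (h : algebraMap ℝ A c ≤ p) :
    ‖p⁻¹ʳ‖ ≤ c⁻¹ := by
  rw [← cfc_ringInverse_id (R := ℝ) p (isUnit_of_algebraMap_le hc h)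
    (isSelfAdjoint_of_algebraMap_le h)]
  refine norm_cfc_le (inv_nonneg.2 hc.le) fun x hx => ?_
  have hcx := le_of_mem_spectrum_of_algebraMap_le h hx
  rw [norm_inv, Real.norm_of_nonneg (hc.le.trans hcx)]
  exact inv_anti₀ hc hcx

lemma one_sub_ringInverse_nonneg (h : 1 ≤ p) : 0 ≤ 1 - p⁻¹ʳ := by
  rw [← map_one (algebraMap ℝ A)] at h
  have hsa := isSelfAdjoint_of_algebraMap_le h
  have hspec (x : ℝ) (hx : x ∈ spectrum ℝ p) : 1 ≤ x := le_of_mem_spectrum_of_algebraMap_le h hx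
  have hinv : ContinuousOn (·⁻¹ : ℝ → ℝ) (spectrum ℝ p) :=
    continuousOn_inv₀.mono fun x hx => (one_pos.trans_le (hspec x hx)).ne'
  rw [← cfc_ringInverse_id (R := ℝ) p (isUnit_of_algebraMap_le one_pos h) hsa,
    ← cfc_const_one ℝ p hsa, ← cfc_sub _ _ p continuousOn_const hinv]
  exact cfc_nonneg fun x hx => sub_nonneg.2 (inv_le_one_of_one_le₀ (hspec x hx))

lemma riccatiMap_nonneg (hr : 0 ≤ r) (hx : 0 ≤ x) : 0 ≤ riccatiMap a r x := by
  have hp : 1 ≤ a * x * star a + r + 1 :=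
    le_add_of_nonneg_left (add_nonneg (star_right_conjugate_nonneg hx a) hr)
  have hu := isUnit_of_algebraMap_le one_pos ((map_one (algebraMap ℝ A)).trans_le hp)
  rw [riccatiMap, mul_ringInverse_add_one hu]
  exact one_sub_ringInverse_nonneg hp

lemma riccatiMap_sub (hc : 0 < c) (hr : algebraMap ℝ A c ≤ r + 1) (hx : 0 ≤ x) (hy : 0 ≤ y) :
    riccatiMap a r x - riccatiMap a r y =
      (a * x * star a + r + 1)⁻¹ʳ * (a * (x - y) * star a) * (a * y * star a + r + 1)⁻¹ʳ := by
  have hpx := isUnit_of_algebraMap_le hc (algebraMap_le_conj_add_add_one (a := a) hr hx)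
  have hpy := isUnit_of_algebraMap_le hc (algebraMap_le_conj_add_add_one (a := a) hr hy)
  rw [riccatiMap, riccatiMap, mul_ringInverse_add_one hpx, mul_ringInverse_add_one hpy,
    sub_sub_sub_cancel_left, ringInverse_sub_ringInverse hpx hpy]
  congr 2
  noncomm_ring

lemma norm_riccatiMap_sub_le [NormedStarGroup A] (hc : 0 < c) (hr : algebraMap ℝ A c ≤ r + 1)
    (hx : 0 ≤ x) (hy : 0 ≤ y) :
    ‖riccatiMap a r x - riccatiMap a r y‖ ≤ (‖a‖ / c) ^ 2 * ‖x - y‖ := by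
  have hnx := norm_ringInverse_le_of_algebraMap_le hc
    (algebraMap_le_conj_add_add_one (a := a) hr hx)
  have hny := norm_ringInverse_le_of_algebraMap_le hc
    (algebraMap_le_conj_add_add_one (a := a) hr hy)
  have hmid : ‖a * (x - y) * star a‖ ≤ ‖a‖ * ‖x - y‖ * ‖a‖ :=
    norm_mul₃_le.trans_eq (by rw [norm_star])
  calc ‖riccatiMap a r x - riccatiMap a r y‖ ≤ c⁻¹ * (‖a‖ * ‖x - y‖ * ‖a‖) * c⁻¹ := by
        rw [riccatiMap_sub hc hr hx hy]
        exact norm_mul_le_of_le (norm_mul_le_of_le hnx hmid) hny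
    _ = (‖a‖ / c) ^ 2 * ‖x - y‖ := by ring

lemma norm_riccatiMap_orbit_sub_le [NormedStarGroup A] {s : ℕ → A} (hc : 0 < c) (hr₀ : 0 ≤ r)
    (hr : algebraMap ℝ A c ≤ r + 1) (hs₀ : 0 ≤ s 0) (hs : ∀ t, s (t + 1) = riccatiMap a r (s t))
    (t n : ℕ) : ‖s (t + n) - s t‖ ≤ ((‖a‖ / c) ^ 2) ^ t * ‖s n - s 0‖ := by
  have hnonneg (t : ℕ) : s t ∈ Set.Ici 0 := by
    induction t with
    | zero => exact hs₀
    | succ t ih => exact hs t ▸ riccatiMap_nonneg hr₀ ih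
  exact norm_orbit_sub_le_pow_mul (sq_nonneg _) hs hnonneg
    (fun x hx y hy => norm_riccatiMap_sub_le hc hr hx hy) t n

end RealCFC

open scoped MatrixOrder

lemma Matrix.IsHermitian.algebraMap_le_of_le_eigenvalues {n 𝕜 : Type*} [Fintype n]
    [DecidableEq n] [RCLike 𝕜] {M : Matrix n n 𝕜} (hM : M.IsHermitian) {c : ℝ}
    (h : ∀ i, c ≤ hM.eigenvalues i) : algebraMap ℝ (Matrix n n 𝕜) c ≤ M := by
  refine algebraMap_le_of_le_spectrum (fun x hx => ?_) hM.isSelfAdjoint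
  obtain ⟨i, rfl⟩ := hM.spectrum_real_eq_range_eigenvalues ▸ hx
  exact h i

open scoped Matrix.Norms.L2Operator

theorem riccati_contraction_general {K : ℕ}
    (A R S0 : Matrix (Fin K) (Fin K) ℝ) (lam : ℝ)
    (hR : R.PosDef) (hS0 : S0.PosDef)
    (hlam : IsLeast (Set.range hR.1.eigenvalues) lam)
    (S : ℕ → Matrix (Fin K) (Fin K) ℝ)
    (hinit : S 0 = S0)
    (hrec : ∀ t : ℕ, S (t + 1) = (A * S t * Aᵀ + R) * (A * S t * Aᵀ + R + 1)⁻¹) :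
    (∀ t n : ℕ, opNorm (S (t + n) - S t) ≤
        (opNorm A / (1 + lam)) ^ (2 * t) * opNorm (S n - S 0)) ∧
      (opNorm A < 1 →
        ∀ ε : ℝ, 0 < ε → ∃ N : ℕ, ∀ s t : ℕ, N ≤ s → N ≤ t →
          opNorm (S s - S t) < ε) := by
  have hlam_pos : 0 < lam := by
    obtain ⟨i, rfl⟩ := hlam.1
    exact hR.eigenvalues_pos i
  have hc : 0 < 1 + lam := by linarith
  have hR_ge : algebraMap ℝ (Matrix (Fin K) (Fin K) ℝ) (1 + lam) ≤ R + 1 := by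
    rw [add_comm, map_add, map_one]
    exact add_le_add_left (hR.1.algebraMap_le_of_le_eigenvalues fun i => hlam.2 ⟨i, rfl⟩) 1
  have hstep (t : ℕ) : S (t + 1) = riccatiMap A R (S t) := by
    rw [hrec, riccatiMap, nonsing_inv_eq_ringInverse, star_eq_conjTranspose,
      conjTranspose_eq_transpose_of_trivial]
  have hbound (t n : ℕ) : opNorm (S (t + n) - S t) ≤
      (opNorm A / (1 + lam)) ^ (2 * t) * opNorm (S n - S 0) := by
    rw [pow_mul]
    exact norm_riccatiMap_orbit_sub_le hc (nonneg_iff_posSemidef.2 hR.posSemidef) hR_ge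
      (hinit ▸ nonneg_iff_posSemidef.2 hS0.posSemidef) hstep t n
  refine ⟨hbound, fun hA => ?_⟩
  have hq : (opNorm A / (1 + lam)) ^ 2 < 1 := by
    refine pow_lt_one₀ (by positivity) ((div_le_self (norm_nonneg _) ?_).trans_lt hA) two_ne_zero
    linarith
  have hcauchy : CauchySeq S :=
    cauchySeq_of_le_geometric _ (opNorm (S 1 - S 0)) hq fun t => by
      rw [dist_comm, dist_eq_norm, ← pow_mul, mul_comm]
      exact hbound t 1
  intro ε hε
  obtain ⟨N, hN⟩ := Metric.cauchySeq_iff.1 hcauchy ε hε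
  exact ⟨N, fun s t hs ht => (dist_eq_norm (S s) (S t)).symm.trans_lt (hN s hs t ht)⟩

/-- geometric contraction of the Riccati sequence
`Σ_t = (A Σ_{t−1} Aᵀ + R)(A Σ_{t−1} Aᵀ + R + I)⁻¹`:
`‖Σ_{t+n} − Σ_t‖ ≤ (‖A‖/(1 + λ))^{2t} ‖Σ_n − Σ₀‖`, where `λ > 0` is the smallest
eigenvalue of `R`; in particular if `‖A‖ < 1` the sequence is Cauchy in operator norm. -/
theorem riccati_contraction {K : ℕ}
    (A R S0 : Matrix (Fin K) (Fin K) ℝ) (lam : ℝ)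
    (hR : R.PosDef) (hS0 : S0.PosDef)
    (hlam_pos : 0 < lam)
    (hlam : IsLeast (Set.range hR.1.eigenvalues) lam)
    (S : ℕ → Matrix (Fin K) (Fin K) ℝ)
    (hinit : S 0 = S0)
    (hrec : ∀ t : ℕ, S (t + 1) = (A * S t * Aᵀ + R) * (A * S t * Aᵀ + R + 1)⁻¹) :
    (∀ t n : ℕ, opNorm (S (t + n) - S t) ≤
        (opNorm A / (1 + lam)) ^ (2 * t) * opNorm (S n - S 0)) ∧
      (opNorm A < 1 →
        ∀ ε : ℝ, 0 < ε → ∃ N : ℕ, ∀ s t : ℕ, N ≤ s → N ≤ t →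
          opNorm (S s - S t) < ε) :=
  riccati_contraction_general A R S0 lam hR hS0 hlam S hinit hrec
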